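/- Let g, φ ∈ L²(ℝᵈ) and let Λ = Aℤ^{2d} be a lattice such that the Gabor system 𝒢(g,Λ) satisfies the Bessel condition with bound B. Set h(λ) = |⟨g, π(λ)φ⟩| for λ ∈ Λ and assume h ∈ ℓ¹(Λ). For each ν ∈ Λ let a_ν be a bounded sequence on Λ, put α(ν) = ‖a_ν‖_∞, and assume α ∈ ℓ¹(Λ). Let T = Σ_{ν∈Λ} π(ν) M_{a_ν} (the series converging absolutely in operator norm on L²(ℝᵈ)). Then the matrix of T with respect to the system {π(λ)φ} is dominated by a convolution: for all λ, μ ∈ Λ, |⟨T(π(μ)φ), π(λ)φ⟩| ≤ (α ⋆ h^{*} ⋆ h)(λ − μ), where (u ⋆ w)(λ) = Σ_{κ∈Λ} u(κ) w(λ−κ) is convolution on the group Λ and h^{*}(λ) = h(−λ). -/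

import Mathlib

open MeasureTheory Complex Filter
open scoped InnerProductSpace ENNReal

noncomputable section

/-- `ℝᵈ` with the Euclidean norm. -/
abbrev Ed (d : ℕ) := EuclideanSpace ℝ (Fin d)

/-- `L²(ℝᵈ)`. -/
abbrev Ltwo (d : ℕ) := Lp ℂ 2 (volume : Measure (Ed d))

/-- The index group `ℤ^{2d}` of the lattice `Λ = Aℤ^{2d}`. -/
abbrev Idx (d : ℕ) := Fin (d + d) → ℤ

/-- The Euclidean norm on the time-frequency plane `ℝᵈ × ℝᵈ ≅ ℝ^{2d}`. -/
def pnorm {d : ℕ} (z : Ed d × Ed d) : ℝ := Real.sqrt (‖z.1‖ ^ 2 + ‖z.2‖ ^ 2)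

/-- The lattice point `A k ∈ ℝ^{2d}` (for `k ∈ ℤ^{2d}`), split as a pair in `ℝᵈ × ℝᵈ`. -/
def latt {d : ℕ} (A : Matrix (Fin (d + d)) (Fin (d + d)) ℝ) (k : Idx d) : Ed d × Ed d :=
  ((WithLp.toLp 2 (fun i => A.mulVec (fun j => (k j : ℝ)) (Fin.castAdd d i)) : EuclideanSpace ℝ (Fin d)),
   (WithLp.toLp 2 (fun i => A.mulVec (fun j => (k j : ℝ)) (Fin.natAdd d i)) : EuclideanSpace ℝ (Fin d)))

/-- `U` is the family of time-frequency shifts on `L²(ℝᵈ)`: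
`(U (x, ξ) f)(t) = e^{2πi ξ·t} f(t - x)`.  (This formula determines each `U z` as the
unitary operator `π(z)`.) -/
def IsTFS {d : ℕ} (U : Ed d × Ed d → (Ltwo d →L[ℂ] Ltwo d)) : Prop :=
  ∀ z : Ed d × Ed d, ∀ f : Ltwo d,
    (U z f : Ed d → ℂ) =ᵐ[volume]
      fun t => Complex.exp (2 * Real.pi * Complex.I * (⟪z.2, t⟫_ℝ : ℂ)) * f (t - z.1)

/-- `M` is the Gabor multiplier with window `g`, lattice `Aℤ^{2d}` and symbol `a`:
`M f = Σ_μ a(μ) ⟨f, π(μ)g⟩ π(μ)g`.  (Mathlib's inner product is conjugate-linear in the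
first argument, so the paper's `⟨f, π(μ)g⟩` is `⟪π(μ)g, f⟫` here.) -/
def IsGM {d : ℕ} (U : Ed d × Ed d → (Ltwo d →L[ℂ] Ltwo d)) (g : Ltwo d)
    (A : Matrix (Fin (d + d)) (Fin (d + d)) ℝ) (a : Idx d → ℂ)
    (M : Ltwo d →L[ℂ] Ltwo d) : Prop :=
  ∀ f : Ltwo d, M f = ∑' μ : Idx d, (a μ * ⟪U (latt A μ) g, f⟫_ℂ) • U (latt A μ) g

/-- The Gabor system `{π(λ)g : λ ∈ Aℤ^{2d}}` satisfies the Bessel condition with bound `B`: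
`Σ_λ |⟨f, π(λ)g⟩|² ≤ B ‖f‖²` for all `f ∈ L²` (stated via finite partial sums, which is
equivalent to summability together with the bound on the sum). -/
def Bessel {d : ℕ} (U : Ed d × Ed d → (Ltwo d →L[ℂ] Ltwo d)) (g : Ltwo d)
    (A : Matrix (Fin (d + d)) (Fin (d + d)) ℝ) (B : ℝ) : Prop :=
  ∀ f : Ltwo d, ∀ F : Finset (Idx d),
    ∑ k ∈ F, ‖(⟪U (latt A k) g, f⟫_ℂ : ℂ)‖ ^ 2 ≤ B * ‖f‖ ^ 2

/-- Convolution of sequences on the lattice group. -/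
def conv {d : ℕ} (u w : Idx d → ℝ) : Idx d → ℝ := fun p => ∑' j : Idx d, u j * w (p - j)

/-! ### Auxiliary lemmas about time-frequency shifts -/

variable {d : ℕ} {U : Ed d × Ed d → (Ltwo d →L[ℂ] Ltwo d)}

/-- A time-frequency shift preserves inner products. -/
lemma TFS.inner_eq (hU : IsTFS U) (z : Ed d × Ed d) (f f' : Ltwo d) :
    ⟪U z f, U z f'⟫_ℂ = ⟪f, f'⟫_ℂ := by
  rw [MeasureTheory.L2.inner_def, MeasureTheory.L2.inner_def]
  have h1 := hU z f
  have h2 := hU z f'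
  have key : (fun t => (⟪(U z f : Ed d → ℂ) t, (U z f' : Ed d → ℂ) t⟫_ℂ : ℂ))
      =ᵐ[volume] fun t => (starRingEnd ℂ) (f (t - z.1)) * f' (t - z.1) := by
    filter_upwards [h1, h2] with t e1 e2
    rw [RCLike.inner_apply, e1, e2]
    rw [map_mul, ← Complex.exp_conj]
    have hc : (starRingEnd ℂ) (2 * Real.pi * Complex.I * ((⟪z.2, t⟫_ℝ : ℝ) : ℂ))
        = -(2 * Real.pi * Complex.I * ((⟪z.2, t⟫_ℝ : ℝ) : ℂ)) := by
      simp only [map_mul, map_ofNat, Complex.conj_I, Complex.conj_ofReal]; ring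
    rw [hc]
    rw [show ∀ (A : ℂ) (b c : ℂ), Complex.exp A * b * (Complex.exp (-A) * c)
        = (Complex.exp (-A) * Complex.exp A) * (c * b) from fun A b c => by ring,
      ← Complex.exp_add, neg_add_cancel, Complex.exp_zero, one_mul]
  rw [integral_congr_ae key]
  rw [show (fun t : Ed d => (starRingEnd ℂ) (f (t - z.1)) * f' (t - z.1))
      = fun t : Ed d => (fun s => (starRingEnd ℂ) (f s) * f' s) (t - z.1) from rfl]
  rw [integral_sub_right_eq_self (μ := (volume : Measure (Ed d)))
    (fun s => (starRingEnd ℂ) (f s) * f' s) z.1]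
  exact integral_congr_ae (Eventually.of_forall fun x => by
    show (starRingEnd ℂ) (f x) * f' x = ⟪f x, f' x⟫_ℂ
    rw [RCLike.inner_apply]; ring)

/-- Composition of time-frequency shifts is a time-frequency shift, up to a phase factor. -/
lemma TFS.comp_eq (hU : IsTFS U) (z w : Ed d × Ed d) (f : Ltwo d) :
    ∃ c : ℂ, ‖c‖ = 1 ∧ U z (U w f) = c • U (z + w) f := by
  set c : ℂ := Complex.exp (((-(2 * Real.pi * ⟪w.2, z.1⟫_ℝ) : ℝ) : ℂ) * Complex.I) with hc
  refine ⟨c, Complex.norm_exp_ofReal_mul_I _, ?_⟩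
  apply Lp.ext
  have h1 := hU z (U w f)
  have h3 : (fun t : Ed d => (U w f : Ed d → ℂ) (t - z.1)) =ᵐ[volume]
      (fun t : Ed d =>
        Complex.exp (2 * Real.pi * Complex.I * ((⟪w.2, t - z.1⟫_ℝ : ℝ) : ℂ)) *
          f (t - z.1 - w.1)) :=
    (measurePreserving_sub_right (volume : Measure (Ed d)) z.1).quasiMeasurePreserving.ae_eq_comp
      (hU w f)
  have h4 := hU (z + w) f
  have h5 := Lp.coeFn_smul c (U (z + w) f)
  filter_upwards [h1, h3, h4, h5] with t e1 e3 e4 e5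
  rw [e1]
  have e3' : (U w f : Ed d → ℂ) (t - z.1)
      = Complex.exp (2 * Real.pi * Complex.I * ((⟪w.2, t - z.1⟫_ℝ : ℝ) : ℂ)) *
          f (t - z.1 - w.1) := e3
  rw [e3', e5, Pi.smul_apply, smul_eq_mul, e4]
  have hF : t - z.1 - w.1 = t - (z + w).1 := by rw [Prod.fst_add, sub_sub]
  rw [hF, ← mul_assoc, ← mul_assoc, ← Complex.exp_add, ← Complex.exp_add]
  congr 1
  rw [inner_sub_right, Prod.snd_add, inner_add_left]
  push_cast
  ring

/-- A time-frequency shift preserves the norm. -/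
lemma TFS.norm_eq (hU : IsTFS U) (z : Ed d × Ed d) (f : Ltwo d) : ‖U z f‖ = ‖f‖ := by
  have := congrArg (RCLike.re (K := ℂ)) (TFS.inner_eq hU z f f)
  rw [inner_self_eq_norm_sq (𝕜 := ℂ), inner_self_eq_norm_sq (𝕜 := ℂ)] at this
  exact sq_eq_sq₀ (norm_nonneg _) (norm_nonneg _) |>.mp this

lemma TFS.norm_inner_shift (hU : IsTFS U) (z w : Ed d × Ed d) (f f' : Ltwo d) :
    ‖(⟪U z f, U w f'⟫_ℂ : ℂ)‖ = ‖(⟪f, U (w - z) f'⟫_ℂ : ℂ)‖ := by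
  obtain ⟨c, hc1, hc⟩ := TFS.comp_eq hU z (w - z) f'
  rw [add_sub_cancel] at hc
  have key := TFS.inner_eq hU z f (U (w - z) f')
  rw [hc, inner_smul_right] at key
  calc ‖(⟪U z f, U w f'⟫_ℂ : ℂ)‖ = ‖c * ⟪U z f, U w f'⟫_ℂ‖ := by
        rw [norm_mul, hc1, one_mul]
  _ = ‖(⟪f, U (w - z) f'⟫_ℂ : ℂ)‖ := by rw [key]

lemma TFS.norm_inner_shift' (hU : IsTFS U) (z w : Ed d × Ed d) (f f' : Ltwo d) :
    ‖(⟪U z f, U w f'⟫_ℂ : ℂ)‖ = ‖(⟪U (z - w) f, f'⟫_ℂ : ℂ)‖ := by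
  rw [← inner_conj_symm, RCLike.norm_conj, TFS.norm_inner_shift hU w z f' f,
    ← inner_conj_symm, RCLike.norm_conj]

/-! ### Additivity of the lattice map -/

lemma latt_add {d : ℕ} (A : Matrix (Fin (d + d)) (Fin (d + d)) ℝ) (k k' : Idx d) :
    latt A (k + k') = latt A k + latt A k' := by
  have hv : (fun j => ((k + k') j : ℝ)) = (fun j => (k j : ℝ)) + (fun j => (k' j : ℝ)) := by
    funext j; push_cast [Pi.add_apply]; ring
  unfold latt
  rw [hv, Matrix.mulVec_add]
  rfl

lemma latt_neg {d : ℕ} (A : Matrix (Fin (d + d)) (Fin (d + d)) ℝ) (k : Idx d) :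
    latt A (-k) = -latt A k := by
  have hv : (fun j => ((-k) j : ℝ)) = -(fun j => (k j : ℝ)) := by
    funext j; push_cast [Pi.neg_apply]; ring
  unfold latt
  rw [hv, Matrix.mulVec_neg]
  rfl

lemma latt_sub {d : ℕ} (A : Matrix (Fin (d + d)) (Fin (d + d)) ℝ) (k k' : Idx d) :
    latt A (k - k') = latt A k - latt A k' := by
  rw [sub_eq_add_neg, latt_add, latt_neg, sub_eq_add_neg]

set_option maxHeartbeats 1000000
set_option synthInstance.maxHeartbeats 1000000

theorem statement15 (d : ℕ) (A : Matrix (Fin (d + d)) (Fin (d + d)) ℝ) (hA : IsUnit A.det)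
    (g φ : Ltwo d) (U : Ed d × Ed d → (Ltwo d →L[ℂ] Ltwo d)) (hU : IsTFS U)
    (B : ℝ) (hB : Bessel U g A B)
    (h : Idx d → ℝ)
    (hdef : ∀ k : Idx d, h k = ‖(⟪U (latt A k) φ, g⟫_ℂ : ℂ)‖)
    (hh : Summable h)
    (a : Idx d → lp (fun _ : Idx d => ℂ) ∞)
    (M : Idx d → (Ltwo d →L[ℂ] Ltwo d))
    (hM : ∀ ν : Idx d, IsGM U g A (fun μ => a ν μ) (M ν))
    (hα : Summable fun ν : Idx d => ‖a ν‖)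
    (hS : Summable (fun ν : Idx d => ‖(U (latt A ν)).comp (M ν)‖)) :
    ∀ l m : Idx d,
      ‖(⟪U (latt A l) φ,
          (∑' ν : Idx d, (U (latt A ν)).comp (M ν)) (U (latt A m) φ)⟫_ℂ : ℂ)‖ ≤
        conv (fun ν : Idx d => ‖a ν‖) (conv (fun j : Idx d => h (-j)) h) (l - m) := by
  intro l m
  classical
  have hnorm := TFS.norm_eq hU
  have hpos : ∀ k : Idx d, 0 ≤ h k := by intro k; rw [hdef k]; exact norm_nonneg _
  have hbd : ∀ k : Idx d, h k ≤ ‖φ‖ * ‖g‖ := by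
    intro k; rw [hdef k]
    calc ‖(⟪U (latt A k) φ, g⟫_ℂ : ℂ)‖ ≤ ‖U (latt A k) φ‖ * ‖g‖ := norm_inner_le_norm _ _
    _ = ‖φ‖ * ‖g‖ := by rw [hnorm]
  -- the two basic matrix-coefficient identities
  have E1 : ∀ μ mm : Idx d, ‖(⟪U (latt A μ) g, U (latt A mm) φ⟫_ℂ : ℂ)‖ = h (mm - μ) := by
    intro μ mm
    rw [TFS.norm_inner_shift hU, ← latt_sub, ← inner_conj_symm, RCLike.norm_conj, ← hdef]
  have E2 : ∀ ll ν μ : Idx d,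
      ‖(⟪U (latt A ll) φ, U (latt A ν) (U (latt A μ) g)⟫_ℂ : ℂ)‖ = h (ll - ν - μ) := by
    intro ll ν μ
    obtain ⟨c, hc1, hc⟩ := TFS.comp_eq hU (latt A ν) (latt A μ) g
    rw [hc, inner_smul_right, norm_mul, hc1, one_mul, ← latt_add,
      TFS.norm_inner_shift' hU, ← latt_sub, ← hdef, sub_sub]
  -- summability of shifted copies of h
  have hsum_shift : ∀ p : Idx d, Summable (fun μ : Idx d => h (p - μ)) := by
    intro p
    exact ((Equiv.subLeft p).summable_iff).mpr hh
  -- coefficients of the Gabor multiplier expansion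
  set cf : Idx d → Idx d → ℂ :=
    fun ν μ => (a ν μ) * ⟪U (latt A μ) g, U (latt A m) φ⟫_ℂ with hcf
  have hcfbd : ∀ ν μ, ‖cf ν μ‖ ≤ ‖a ν‖ * h (m - μ) := by
    intro ν μ
    rw [hcf]
    simp only
    rw [norm_mul, E1]
    exact mul_le_mul_of_nonneg_right (lp.norm_apply_le_norm ENNReal.top_ne_zero (a ν) μ)
      (hpos _)
  -- dominating kernel
  set G : Idx d → Idx d → ℝ := fun ν μ => ‖a ν‖ * (h (m - μ) * h (l - ν - μ)) with hGdef
  have hGpos : ∀ ν μ, 0 ≤ G ν μ := fun ν μ =>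
    mul_nonneg (norm_nonneg _) (mul_nonneg (hpos _) (hpos _))
  have hGsum : ∀ ν, Summable (G ν) := by
    intro ν
    refine Summable.of_nonneg_of_le (hGpos ν) (fun μ => ?_) (((hsum_shift m).mul_left
      (‖a ν‖ * (‖φ‖ * ‖g‖))))
    calc G ν μ = ‖a ν‖ * (h (m - μ) * h (l - ν - μ)) := rfl
    _ ≤ ‖a ν‖ * (h (m - μ) * (‖φ‖ * ‖g‖)) := by
        apply mul_le_mul_of_nonneg_left _ (norm_nonneg _)
        exact mul_le_mul_of_nonneg_left (hbd _) (hpos _)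
    _ = ‖a ν‖ * (‖φ‖ * ‖g‖) * h (m - μ) := by ring
  have houter_sum : Summable (fun ν : Idx d => ∑' μ : Idx d, G ν μ) := by
    refine Summable.of_nonneg_of_le (fun ν => tsum_nonneg (hGpos ν)) (fun ν => ?_)
      (hα.mul_right ((‖φ‖ * ‖g‖) * ∑' μ : Idx d, h (m - μ)))
    calc (∑' μ : Idx d, G ν μ)
        ≤ ∑' μ : Idx d, (‖a ν‖ * (‖φ‖ * ‖g‖)) * h (m - μ) := by
          refine Summable.tsum_le_tsum (fun μ => ?_) (hGsum ν) (((hsum_shift m).mul_left _))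
          calc G ν μ ≤ ‖a ν‖ * (h (m - μ) * (‖φ‖ * ‖g‖)) := by
                apply mul_le_mul_of_nonneg_left _ (norm_nonneg _)
                exact mul_le_mul_of_nonneg_left (hbd _) (hpos _)
          _ = (‖a ν‖ * (‖φ‖ * ‖g‖)) * h (m - μ) := by ring
    _ = ‖a ν‖ * ((‖φ‖ * ‖g‖) * ∑' μ : Idx d, h (m - μ)) := by
          rw [tsum_mul_left]; ring
  -- summability of terms of the multiplier expansion
  have hsum_cf : ∀ ν, Summable (fun μ : Idx d => cf ν μ • U (latt A μ) g) := by
    intro ν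
    apply Summable.of_norm
    refine Summable.of_nonneg_of_le (fun μ => norm_nonneg _) (fun μ => ?_)
      (((hsum_shift m).mul_left (‖a ν‖ * ‖g‖)))
    calc ‖cf ν μ • U (latt A μ) g‖ = ‖cf ν μ‖ * ‖g‖ := by rw [norm_smul, hnorm]
    _ ≤ (‖a ν‖ * h (m - μ)) * ‖g‖ :=
        mul_le_mul_of_nonneg_right (hcfbd ν μ) (norm_nonneg _)
    _ = (‖a ν‖ * ‖g‖) * h (m - μ) := by ring
  have hsum_cfU : ∀ ν, Summable (fun μ : Idx d => cf ν μ • U (latt A ν) (U (latt A μ) g)) := by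
    intro ν
    have := (hsum_cf ν).map (U (latt A ν)) (U (latt A ν)).continuous
    simpa only [Function.comp_def, ContinuousLinearMap.map_smul] using this
  -- per-ν expansion
  have hMν : ∀ ν : Idx d, ((U (latt A ν)).comp (M ν)) (U (latt A m) φ)
      = ∑' μ : Idx d, cf ν μ • U (latt A ν) (U (latt A μ) g) := by
    intro ν
    rw [ContinuousLinearMap.comp_apply, hM ν (U (latt A m) φ)]
    have key : (U (latt A ν)) (∑' μ : Idx d, cf ν μ • U (latt A μ) g)
        = ∑' μ : Idx d, cf ν μ • (U (latt A ν)) ((U (latt A μ)) g) := by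
      rw [(U (latt A ν)).map_tsum (hsum_cf ν)]
      simp only [ContinuousLinearMap.map_smul]
    exact key
  -- per-ν norm bound
  have hXnorm : ∀ ν : Idx d,
      ‖(⟪U (latt A l) φ, ((U (latt A ν)).comp (M ν)) (U (latt A m) φ)⟫_ℂ : ℂ)‖
        ≤ ∑' μ : Idx d, G ν μ := by
    intro ν
    rw [hMν ν]
    have hinner : (⟪U (latt A l) φ,
        ∑' μ : Idx d, cf ν μ • U (latt A ν) (U (latt A μ) g)⟫_ℂ : ℂ)
        = ∑' μ : Idx d, cf ν μ * ⟪U (latt A l) φ, U (latt A ν) (U (latt A μ) g)⟫_ℂ := by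
      have := (innerSL ℂ (U (latt A l) φ)).map_tsum (hsum_cfU ν)
      simpa only [innerSL_apply_apply, inner_smul_right] using this
    rw [hinner]
    have hptbd : ∀ μ : Idx d,
        ‖cf ν μ * ⟪U (latt A l) φ, U (latt A ν) (U (latt A μ) g)⟫_ℂ‖ ≤ G ν μ := by
      intro μ
      rw [norm_mul, E2]
      calc ‖cf ν μ‖ * h (l - ν - μ) ≤ (‖a ν‖ * h (m - μ)) * h (l - ν - μ) :=
            mul_le_mul_of_nonneg_right (hcfbd ν μ) (hpos _)
      _ = G ν μ := by rw [hGdef]; ring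
    have hnsum : Summable (fun μ : Idx d =>
        ‖cf ν μ * ⟪U (latt A l) φ, U (latt A ν) (U (latt A μ) g)⟫_ℂ‖) :=
      Summable.of_nonneg_of_le (fun μ => norm_nonneg _) hptbd (hGsum ν)
    calc ‖∑' μ : Idx d, cf ν μ * ⟪U (latt A l) φ, U (latt A ν) (U (latt A μ) g)⟫_ℂ‖
        ≤ ∑' μ : Idx d, ‖cf ν μ * ⟪U (latt A l) φ, U (latt A ν) (U (latt A μ) g)⟫_ℂ‖ :=
          norm_tsum_le_tsum_norm hnsum
    _ ≤ ∑' μ : Idx d, G ν μ := Summable.tsum_le_tsum hptbd hnsum (hGsum ν)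
  -- summability of operators
  have hSsum : Summable (fun ν : Idx d => (U (latt A ν)).comp (M ν)) := hS.of_norm
  have hT : (∑' ν : Idx d, (U (latt A ν)).comp (M ν)) (U (latt A m) φ)
      = ∑' ν : Idx d, ((U (latt A ν)).comp (M ν)) (U (latt A m) φ) := by
    exact (ContinuousLinearMap.apply ℂ (Ltwo d) (U (latt A m) φ)).map_tsum hSsum
  have hSapp : Summable (fun ν : Idx d => ((U (latt A ν)).comp (M ν)) (U (latt A m) φ)) := by
    have := hSsum.map (ContinuousLinearMap.apply ℂ (Ltwo d) (U (latt A m) φ))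
      (ContinuousLinearMap.apply ℂ (Ltwo d) (U (latt A m) φ)).continuous
    simpa only [Function.comp_def, ContinuousLinearMap.apply_apply] using this
  have hinnerT : (⟪U (latt A l) φ,
      (∑' ν : Idx d, (U (latt A ν)).comp (M ν)) (U (latt A m) φ)⟫_ℂ : ℂ)
      = ∑' ν : Idx d, ⟪U (latt A l) φ, ((U (latt A ν)).comp (M ν)) (U (latt A m) φ)⟫_ℂ := by
    rw [hT]
    have := (innerSL ℂ (U (latt A l) φ)).map_tsum hSapp
    simpa only [innerSL_apply_apply] using this
  have hXsum : Summable (fun ν : Idx d =>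
      ‖(⟪U (latt A l) φ, ((U (latt A ν)).comp (M ν)) (U (latt A m) φ)⟫_ℂ : ℂ)‖) :=
    Summable.of_nonneg_of_le (fun ν => norm_nonneg _) hXnorm houter_sum
  -- the final chain
  calc ‖(⟪U (latt A l) φ,
        (∑' ν : Idx d, (U (latt A ν)).comp (M ν)) (U (latt A m) φ)⟫_ℂ : ℂ)‖
      = ‖∑' ν : Idx d, (⟪U (latt A l) φ,
          ((U (latt A ν)).comp (M ν)) (U (latt A m) φ)⟫_ℂ : ℂ)‖ := by rw [hinnerT]
  _ ≤ ∑' ν : Idx d, ‖(⟪U (latt A l) φ,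
        ((U (latt A ν)).comp (M ν)) (U (latt A m) φ)⟫_ℂ : ℂ)‖ :=
      norm_tsum_le_tsum_norm hXsum
  _ ≤ ∑' ν : Idx d, ∑' μ : Idx d, G ν μ := Summable.tsum_le_tsum hXnorm hXsum houter_sum
  _ = conv (fun ν : Idx d => ‖a ν‖) (conv (fun j : Idx d => h (-j)) h) (l - m) := by
      simp only [conv]
      refine tsum_congr fun ν => ?_
      rw [← tsum_mul_left]
      rw [← (Equiv.subRight m).tsum_eq
        (fun j => ‖a ν‖ * (h (-j) * h (l - m - ν - j)))]
      refine tsum_congr fun μ => ?_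
      simp only [Equiv.subRight_apply, hGdef]
      have e1 : -(μ - m) = m - μ := neg_sub _ _
      have e2 : l - m - ν - (μ - m) = l - ν - μ := by ring
      rw [e1, e2]
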